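/- For N×N symmetric ℤ₂-matrices A and B with N = 2^k, the quantum disparity 1 − |⟨0|^{⊗(2k+1)} B̂ Â |0⟩^{⊗(2k+1)}| equals the normalized classical Frobenius distance (1/N²)·∑_{i,j}(A_{ij} − B_{ij})², where Â, B̂ are the log-Hadamard representations. -/

import Mathlib

open Matrix Kronecker

/-- Vertices of a graph with N = 2^k nodes, encoded as bitstrings of k qubits. -/
abbrev Vtx (k : ℕ) := Fin k → Fin 2

/-- The 2×2 Hadamard matrix. -/
noncomputable def H2 : Matrix (Fin 2) (Fin 2) ℂ :=
  ((Real.sqrt 2 : ℂ))⁻¹ • !![1, 1; 1, -1]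

/-- h(A) = iπ·∑_{i,j} A_{ij} |i,j⟩⟨i,j|. -/
noncomputable def hmat {k : ℕ} (A : Matrix (Vtx k) (Vtx k) (ZMod 2)) :
    Matrix (Vtx k × Vtx k) (Vtx k × Vtx k) ℂ :=
  Matrix.diagonal fun p => Complex.I * (Real.pi : ℂ) * ((A p.1 p.2).val : ℂ)

/-- cexp(K) = I ⊕ exp(K) = |0⟩⟨0|⊗I + |1⟩⟨1|⊗exp(K). -/
noncomputable def cexpM {k : ℕ} (K : Matrix (Vtx k × Vtx k) (Vtx k × Vtx k) ℂ) :
    Matrix (Fin 2 × (Vtx k × Vtx k)) (Fin 2 × (Vtx k × Vtx k)) ℂ :=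
  (Matrix.single 0 0 1) ⊗ₖ (1 : Matrix (Vtx k × Vtx k) (Vtx k × Vtx k) ℂ)
    + (Matrix.single 1 1 1) ⊗ₖ NormedSpace.exp K

/-- The Hadamard transform H^{⊗(2k+1)} on the (2k+1)-qubit space
ℂ² ⊗ (ℂ^{2^k} ⊗ ℂ^{2^k}), given by its entrywise tensor-power formula. -/
noncomputable def Hfull (k : ℕ) :
    Matrix (Fin 2 × (Vtx k × Vtx k)) (Fin 2 × (Vtx k × Vtx k)) ℂ :=
  Matrix.of fun p q =>
    H2 p.1 q.1 * (∏ t, H2 (p.2.1 t) (q.2.1 t)) * ∏ t, H2 (p.2.2 t) (q.2.2 t)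

/-- The log-Hadamard representation Â = H^{⊗(2k+1)}·cexp(h(A))·H^{⊗(2k+1)}. -/
noncomputable def hatRep {k : ℕ} (A : Matrix (Vtx k) (Vtx k) (ZMod 2)) :
    Matrix (Fin 2 × (Vtx k × Vtx k)) (Fin 2 × (Vtx k × Vtx k)) ℂ :=
  Hfull k * cexpM (hmat A) * Hfull k

/-- The all-zeros basis state |0⟩^{⊗(2k+1)}. -/
noncomputable def e0 (k : ℕ) : Fin 2 × (Vtx k × Vtx k) → ℂ :=
  fun p => if p = (0, (fun _ => 0, fun _ => 0)) then 1 else 0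

/-!
H^{⊗(2k+1)} is an involution, so B̂Â = H^{⊗(2k+1)} C H^{⊗(2k+1)} with C = cexp(h(B)) cexp(h(A)),
which is the controlled gate of the diagonal sign matrix with entries
(-1)^{B_{ij}} (-1)^{A_{ij}} = 1 - 2 (A_{ij} - B_{ij})².
The all-zero row and column of H^{⊗(2k+1)} are constant, equal to 2^{-(2k+1)/2}, so the vacuum
amplitude is 2^{-(2k+1)} times the sum of all entries of C, that is
2^{-(2k+1)} (N² + ∑ (1 - 2 (A_{ij} - B_{ij})²)) = 1 - (1/N²) ∑ (A_{ij} - B_{ij})²,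
a real number in [0, 1] since each (A_{ij} - B_{ij})² ≤ 1.
-/

namespace Matrix

section PiTensor

variable {ι n R : Type*} [Fintype ι] [CommSemiring R]

def piTensor (M : Matrix n n R) : Matrix (ι → n) (ι → n) R :=
  of fun f g => ∏ t, M (f t) (g t)

theorem piTensor_mul [DecidableEq ι] [Fintype n] (M N : Matrix n n R) :
    (piTensor M * piTensor N : Matrix (ι → n) (ι → n) R) = piTensor (M * N) := by
  ext f h
  simp only [piTensor, mul_apply, of_apply, ← Finset.prod_mul_distrib]
  exact (Fintype.prod_sum fun t x => M (f t) x * N x (h t)).symm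

theorem piTensor_one [DecidableEq n] : (piTensor 1 : Matrix (ι → n) (ι → n) R) = 1 := by
  ext f g
  simp only [piTensor, of_apply, one_apply, Finset.prod_boole, funext_iff, Finset.mem_univ,
    true_implies]

end PiTensor

section Controlled

variable {n R : Type*} [DecidableEq n] [CommSemiring R]

def controlled (U : Matrix n n R) : Matrix (Fin 2 × n) (Fin 2 × n) R :=
  single 0 0 1 ⊗ₖ 1 + single 1 1 1 ⊗ₖ U

theorem controlled_mul_controlled [Fintype n] (U V : Matrix n n R) :
    controlled U * controlled V = controlled (U * V) := by
  simp only [controlled, add_mul, mul_add, ← mul_kronecker_mul, single_mul_single_same,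
    single_mul_single_of_ne _ _ _ _ (by decide : (0 : Fin 2) ≠ 1),
    single_mul_single_of_ne _ _ _ _ (by decide : (1 : Fin 2) ≠ 0), zero_kronecker, mul_one,
    one_mul, add_zero, zero_add]

theorem sum_controlled_apply [Fintype n] (U : Matrix n n R) :
    ∑ p, ∑ q, controlled U p q = Fintype.card n + ∑ i, ∑ j, U i j := by
  simp [controlled, Fintype.sum_prod_type, Fin.sum_univ_two, one_apply, single_apply]

end Controlled

theorem sum_sum_diagonal_apply {n R : Type*} [Fintype n] [DecidableEq n] [AddCommMonoid R]
    (d : n → R) : ∑ i, ∑ j, diagonal d i j = ∑ i, d i := by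
  simp [diagonal_apply]

theorem mul_mul_apply_of_row_col_const {m R : Type*} [Fintype m] [CommSemiring R]
    (H X : Matrix m m R) (z : m) (c : R) (hrow : ∀ q, H z q = c) (hcol : ∀ p, H p z = c) :
    (H * X * H) z z = c * c * ∑ p, ∑ q, X p q := by
  simp only [mul_apply, hrow, hcol, ← Finset.sum_mul, ← Finset.mul_sum]
  rw [Finset.sum_comm]
  ring

end Matrix

theorem H2_mul_self : H2 * H2 = 1 := by
  have h : ((Real.sqrt 2 : ℂ))⁻¹ * ((Real.sqrt 2 : ℂ))⁻¹ = 2⁻¹ := by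
    rw [← mul_inv, ← Complex.ofReal_mul, Real.mul_self_sqrt zero_le_two, Complex.ofReal_ofNat]
  ext a b
  fin_cases a <;> fin_cases b <;> simp [H2, mul_apply, Fin.sum_univ_two, h] <;> norm_num

theorem H2_zero_left (x : Fin 2) : H2 0 x = ((Real.sqrt 2 : ℝ) : ℂ)⁻¹ := by
  fin_cases x <;> simp [H2]

theorem H2_zero_right (x : Fin 2) : H2 x 0 = ((Real.sqrt 2 : ℝ) : ℂ)⁻¹ := by
  fin_cases x <;> simp [H2]

theorem Hfull_eq_kronecker (k : ℕ) : Hfull k = H2 ⊗ₖ (piTensor H2 ⊗ₖ piTensor H2) := by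
  ext p q
  simp [Hfull, piTensor, mul_assoc]

theorem Hfull_mul_self (k : ℕ) : Hfull k * Hfull k = 1 := by
  rw [Hfull_eq_kronecker, ← mul_kronecker_mul, ← mul_kronecker_mul, piTensor_mul, H2_mul_self,
    piTensor_one, one_kronecker_one, one_kronecker_one]

theorem Hfull_zero_apply (k : ℕ) (q : Fin 2 × (Vtx k × Vtx k)) :
    Hfull k 0 q = (((Real.sqrt 2)⁻¹ ^ (2 * k + 1) : ℝ) : ℂ) := by
  simp only [Hfull, of_apply, Prod.fst_zero, Prod.snd_zero, Pi.zero_apply, H2_zero_left,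
    Finset.prod_const, Finset.card_univ, Fintype.card_fin]
  push_cast
  ring

theorem Hfull_apply_zero (k : ℕ) (p : Fin 2 × (Vtx k × Vtx k)) :
    Hfull k p 0 = (((Real.sqrt 2)⁻¹ ^ (2 * k + 1) : ℝ) : ℂ) := by
  simp only [Hfull, of_apply, Prod.fst_zero, Prod.snd_zero, Pi.zero_apply, H2_zero_right,
    Finset.prod_const, Finset.card_univ, Fintype.card_fin]
  push_cast
  ring

theorem e0_eq_single (k : ℕ) : e0 k = Pi.single 0 1 := by
  ext p
  simp only [e0, Pi.single_apply]
  rfl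

theorem star_e0_dotProduct_mulVec_e0 {k : ℕ}
    (M : Matrix (Fin 2 × (Vtx k × Vtx k)) (Fin 2 × (Vtx k × Vtx k)) ℂ) :
    star (e0 k) ⬝ᵥ (M *ᵥ e0 k) = M 0 0 := by
  simp [e0_eq_single, mulVec_single]

theorem exp_hmat {k : ℕ} (A : Matrix (Vtx k) (Vtx k) (ZMod 2)) :
    NormedSpace.exp (hmat A) = diagonal fun p => (-1) ^ (A p.1 p.2).val := by
  rw [hmat, exp_diagonal]
  congr 1
  funext p
  rw [Pi.coe_exp, ← Complex.exp_eq_exp_ℂ, mul_comm, mul_comm Complex.I, Complex.exp_nat_mul,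
    Complex.exp_pi_mul_I]

theorem cexpM_eq_controlled {k : ℕ} (K : Matrix (Vtx k × Vtx k) (Vtx k × Vtx k) ℂ) :
    cexpM K = controlled (NormedSpace.exp K) :=
  rfl

theorem hatRep_mul_hatRep {k : ℕ} (A B : Matrix (Vtx k) (Vtx k) (ZMod 2)) :
    hatRep B * hatRep A =
      Hfull k * controlled (NormedSpace.exp (hmat B) * NormedSpace.exp (hmat A)) * Hfull k := by
  simp only [hatRep, cexpM_eq_controlled, ← controlled_mul_controlled, mul_assoc]
  rw [← mul_assoc (Hfull k) (Hfull k), Hfull_mul_self, one_mul]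

theorem neg_one_pow_val_mul_neg_one_pow_val (a b : ZMod 2) :
    (-1 : ℝ) ^ b.val * (-1) ^ a.val = 1 - 2 * ((a.val : ℝ) - b.val) ^ 2 := by
  have ha := a.val_lt
  have hb := b.val_lt
  interval_cases a.val <;> interval_cases b.val <;> norm_num

theorem sq_val_sub_val_le_one (a b : ZMod 2) : ((a.val : ℝ) - b.val) ^ 2 ≤ 1 := by
  have ha := a.val_lt
  have hb := b.val_lt
  interval_cases a.val <;> interval_cases b.val <;> norm_num

theorem vacuum_amplitude {k : ℕ} (A B : Matrix (Vtx k) (Vtx k) (ZMod 2)) :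
    star (e0 k) ⬝ᵥ ((hatRep B * hatRep A) *ᵥ e0 k) =
      ((1 - (∑ i : Vtx k, ∑ j : Vtx k, (((A i j).val : ℝ) - (B i j).val) ^ 2) / ((2 : ℝ) ^ k) ^ 2
        : ℝ) : ℂ) := by
  rw [star_e0_dotProduct_mulVec_e0, hatRep_mul_hatRep,
    mul_mul_apply_of_row_col_const _ _ _ _ (Hfull_zero_apply k) (Hfull_apply_zero k),
    sum_controlled_apply, exp_hmat, exp_hmat, diagonal_mul_diagonal, sum_sum_diagonal_apply,
    Fintype.sum_prod_type]
  have hsign : ∀ i j : Vtx k, (-1 : ℂ) ^ (B i j).val * (-1) ^ (A i j).val =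
      ((1 - 2 * (((A i j).val : ℝ) - (B i j).val) ^ 2 : ℝ) : ℂ) := fun i j => by
    exact_mod_cast congrArg Complex.ofReal (neg_one_pow_val_mul_neg_one_pow_val (A i j) (B i j))
  simp only [hsign]
  have hc : ((Real.sqrt 2 : ℝ) : ℂ)⁻¹ ^ (2 * k + 1) * ((Real.sqrt 2 : ℝ) : ℂ)⁻¹ ^ (2 * k + 1)
      = (2 ^ (2 * k + 1))⁻¹ := by
    rw [← mul_pow, ← mul_inv, ← Complex.ofReal_mul, Real.mul_self_sqrt zero_le_two, inv_pow]
    push_cast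
    ring
  push_cast
  simp only [Finset.sum_sub_distrib, ← Finset.mul_sum, Finset.sum_const, Finset.card_univ,
    Fintype.card_prod, Fintype.card_pi, Fintype.card_fin, Finset.prod_const, nsmul_eq_mul, hc]
  push_cast
  field_simp
  ring

theorem stmt_15_general {k : ℕ} (A B : Matrix (Vtx k) (Vtx k) (ZMod 2)) :
    1 - ‖(star (e0 k)) ⬝ᵥ ((hatRep B * hatRep A) *ᵥ e0 k)‖ =
      (1 / ((2 : ℝ) ^ k) ^ 2) *
        ∑ i : Vtx k, ∑ j : Vtx k, (((A i j).val : ℝ) - ((B i j).val : ℝ)) ^ 2 := by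
  set S := ∑ i : Vtx k, ∑ j : Vtx k, (((A i j).val : ℝ) - ((B i j).val : ℝ)) ^ 2
  have hS : S ≤ ((2 : ℝ) ^ k) ^ 2 :=
    calc S ≤ ∑ _i : Vtx k, ∑ _j : Vtx k, (1 : ℝ) :=
          Finset.sum_le_sum fun i _ => Finset.sum_le_sum fun j _ => sq_val_sub_val_le_one _ _
      _ = ((2 : ℝ) ^ k) ^ 2 := by simp [Fintype.card_pi, sq]
  have hN : (0 : ℝ) < ((2 : ℝ) ^ k) ^ 2 := by positivity
  rw [vacuum_amplitude, Complex.norm_real, Real.norm_eq_abs,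
    abs_of_nonneg (sub_nonneg.mpr ((div_le_one hN).mpr hS))]
  ring

/-- The quantum disparity 1 − |⟨0|^{⊗(2k+1)} B̂ Â |0⟩^{⊗(2k+1)}| equals the normalized
classical Frobenius distance (1/N²)·∑_{i,j}(A_{ij} − B_{ij})², N = 2^k. -/
theorem stmt_15 {k : ℕ} (A B : Matrix (Vtx k) (Vtx k) (ZMod 2))
    (hA : A.IsSymm) (hB : B.IsSymm) :
    1 - ‖(star (e0 k)) ⬝ᵥ ((hatRep B * hatRep A) *ᵥ e0 k)‖ =
      (1 / ((2 : ℝ) ^ k) ^ 2) *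
        ∑ i : Vtx k, ∑ j : Vtx k, (((A i j).val : ℝ) - ((B i j).val : ℝ)) ^ 2 :=
  stmt_15_general A B
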